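/- Define c₁†, c₂† : ℕ³ → ℤ[q] by c₁†(k22,k21,k11) = q^{2n} c₂†(k22-1,k21,k11) + q^{2n} c₁†(k22,k21-1,k11) + c₁†(k22,k21,k11-1) and c₂†(k22,k21,k11) = c₂†(k22-1,k21,k11) + c₁†(k22,k21-1,k11) + c₁†(k22,k21,k11-1), where n = k22+k21+k11, with c† = 0 on negative arguments and c†(0,0,0)=1. Then c₂†(k22,k21,k11) = q^{k21(k21-1)} · qmultinomial(k22+k21+k11; k22,k21,k11)_{q²}. -/

import Mathlib

open Polynomial

/-- Gaussian binomial coefficient in `ℤ[q]`, via the `q`-Pascal recurrence;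
equals `(q)_n / ((q)_k (q)_{n-k})`. -/
noncomputable def qbinom : ℕ → ℕ → Polynomial ℤ
  | _, 0 => 1
  | 0, _ + 1 => 0
  | n + 1, k + 1 => qbinom n k + X ^ (k + 1) * qbinom n (k + 1)

/-- Gaussian multinomial coefficient `(a+b+c; a,b,c)_q = (q)_{a+b+c}/((q)_a(q)_b(q)_c)`. -/
noncomputable def qmult (a b c : ℕ) : Polynomial ℤ :=
  qbinom (a + b + c) a * qbinom (b + c) b

/-! Both sequences are determined by the recurrences, by induction on `a + b + c`, so it suffices
to exhibit one solution: with `M` the Gaussian multinomial coefficient,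
`c₁†(a,b,c) = q^{2a + b(b+1)} M(a,b,c)(q²)` and `c₂†(a,b,c) = q^{b(b-1)} M(a,b,c)(q²)`.
After cancelling powers of `q`, the recurrences become the two `q`-Pascal rules
`M(a,b,c) = M(a-1,b,c) + q^a M(a,b-1,c) + q^{a+b} M(a,b,c-1)` and
`M(a,b,c) = q^c M(a-1,b,c) + q^{a+c} M(a,b-1,c) + M(a,b,c-1)`; multiplied by
`(q;q)_a (q;q)_b (q;q)_c` both turn into `1 - q^{a+b+c} = (1 - q^a) + q^a (1 - q^b) + q^{a+b} (1 - q^c)`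
and its mirror image. -/

theorem qbinom_succ_succ (n k : ℕ) :
    qbinom (n + 1) (k + 1) = qbinom n k + X ^ (k + 1) * qbinom n (k + 1) := rfl

theorem qbinom_eq_zero_of_lt {n k : ℕ} (h : n < k) : qbinom n k = 0 := by
  induction n generalizing k with
  | zero => obtain ⟨k, rfl⟩ := Nat.exists_eq_add_one_of_ne_zero h.ne'; rfl
  | succ n ih =>
    obtain ⟨k, rfl⟩ := Nat.exists_eq_add_one_of_ne_zero (Nat.ne_zero_of_lt h)
    rw [qbinom_succ_succ, ih (by omega), ih (by omega), mul_zero, add_zero]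

theorem qbinom_self (n : ℕ) : qbinom n n = 1 := by
  induction n with
  | zero => rfl
  | succ n ih => rw [qbinom_succ_succ, ih, qbinom_eq_zero_of_lt n.lt_succ_self, mul_zero, add_zero]

noncomputable def qPochhammer (n : ℕ) : ℤ[X] :=
  ∏ i ∈ Finset.range n, (1 - X ^ (i + 1))

@[simp]
theorem qPochhammer_zero : qPochhammer 0 = 1 := rfl

theorem qPochhammer_succ (n : ℕ) : qPochhammer (n + 1) = (1 - X ^ (n + 1)) * qPochhammer n := by
  rw [qPochhammer, Finset.prod_range_succ, mul_comm, qPochhammer]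

theorem qPochhammer_ne_zero (n : ℕ) : qPochhammer n ≠ 0 := by
  refine Finset.prod_ne_zero_iff.mpr fun i _ => ?_
  rw [← neg_ne_zero, neg_sub]
  simpa using X_pow_sub_C_ne_zero i.succ_pos (1 : ℤ)

theorem qbinom_mul_qPochhammer (k m : ℕ) :
    qbinom (k + m) k * (qPochhammer k * qPochhammer m) = qPochhammer (k + m) := by
  induction k generalizing m with
  | zero => simp [qbinom]
  | succ k ihk =>
    induction m with
    | zero => simp [qbinom_self]
    | succ m ihm =>
      have hk := ihk (m + 1)
      rw [← add_assoc] at hk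
      rw [add_right_comm] at ihm
      rw [show k + 1 + (m + 1) = k + m + 1 + 1 by ring, qbinom_succ_succ]
      simp only [qPochhammer_succ] at hk ihm ⊢
      linear_combination (1 - X ^ (k + 1)) * hk + X ^ (k + 1) * (1 - X ^ (m + 1)) * ihm

theorem qmult_mul_qPochhammer (a b c : ℕ) :
    qmult a b c * (qPochhammer a * qPochhammer b * qPochhammer c) = qPochhammer (a + b + c) := by
  have hbc := qbinom_mul_qPochhammer b c
  have habc := qbinom_mul_qPochhammer a (b + c)
  rw [← add_assoc] at habc
  rw [qmult]
  linear_combination qbinom (a + b + c) a * qPochhammer a * hbc + habc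

noncomputable def qmultInt (a b c : ℤ) : ℤ[X] :=
  if 0 ≤ a ∧ 0 ≤ b ∧ 0 ≤ c then qmult a.toNat b.toNat c.toNat else 0

@[simp]
theorem qmultInt_natCast (a b c : ℕ) : qmultInt a b c = qmult a b c := by
  simp [qmultInt]

theorem qmultInt_eq_zero_of_neg {a b c : ℤ} (h : a < 0 ∨ b < 0 ∨ c < 0) : qmultInt a b c = 0 :=
  if_neg (by omega)

theorem qmultInt_pred_left_mul (a b c : ℕ) :
    qmultInt ((a : ℤ) - 1) b c * (qPochhammer a * qPochhammer b * qPochhammer c)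
      = (1 - X ^ a) * qPochhammer (a + b + c - 1) := by
  rcases a with _ | a
  · simp [qmultInt_eq_zero_of_neg]
  · rw [Nat.cast_succ, add_sub_cancel_right, qmultInt_natCast, qPochhammer_succ,
      show a + 1 + b + c - 1 = a + b + c by omega]
    linear_combination (1 - X ^ (a + 1)) * qmult_mul_qPochhammer a b c

theorem qmultInt_pred_middle_mul (a b c : ℕ) :
    qmultInt a ((b : ℤ) - 1) c * (qPochhammer a * qPochhammer b * qPochhammer c)
      = (1 - X ^ b) * qPochhammer (a + b + c - 1) := by
  rcases b with _ | b
  · simp [qmultInt_eq_zero_of_neg]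
  · rw [Nat.cast_succ, add_sub_cancel_right, qmultInt_natCast, qPochhammer_succ,
      show a + (b + 1) + c - 1 = a + b + c by omega]
    linear_combination (1 - X ^ (b + 1)) * qmult_mul_qPochhammer a b c

theorem qmultInt_pred_right_mul (a b c : ℕ) :
    qmultInt a b ((c : ℤ) - 1) * (qPochhammer a * qPochhammer b * qPochhammer c)
      = (1 - X ^ c) * qPochhammer (a + b + c - 1) := by
  rcases c with _ | c
  · simp [qmultInt_eq_zero_of_neg]
  · rw [Nat.cast_succ, add_sub_cancel_right, qmultInt_natCast, qPochhammer_succ,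
      show a + b + (c + 1) - 1 = a + b + c by omega]
    linear_combination (1 - X ^ (c + 1)) * qmult_mul_qPochhammer a b c

theorem qmult_pascal (a b c : ℕ) (h : 1 ≤ a + b + c) :
    qmult a b c = qmultInt ((a : ℤ) - 1) b c + X ^ a * qmultInt a ((b : ℤ) - 1) c
      + X ^ (a + b) * qmultInt a b ((c : ℤ) - 1) := by
  refine mul_right_cancel₀ (by simp [qPochhammer_ne_zero] :
    qPochhammer a * qPochhammer b * qPochhammer c ≠ 0) ?_
  have := qPochhammer_succ (a + b + c - 1)
  rw [Nat.sub_add_cancel h] at this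
  linear_combination qmult_mul_qPochhammer a b c - qmultInt_pred_left_mul a b c
    - X ^ a * qmultInt_pred_middle_mul a b c - X ^ (a + b) * qmultInt_pred_right_mul a b c + this

theorem qmult_pascal' (a b c : ℕ) (h : 1 ≤ a + b + c) :
    qmult a b c = X ^ c * qmultInt ((a : ℤ) - 1) b c + X ^ (a + c) * qmultInt a ((b : ℤ) - 1) c
      + qmultInt a b ((c : ℤ) - 1) := by
  refine mul_right_cancel₀ (by simp [qPochhammer_ne_zero] :
    qPochhammer a * qPochhammer b * qPochhammer c ≠ 0) ?_
  have := qPochhammer_succ (a + b + c - 1)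
  rw [Nat.sub_add_cancel h] at this
  linear_combination qmult_mul_qPochhammer a b c - X ^ c * qmultInt_pred_left_mul a b c
    - X ^ (a + c) * qmultInt_pred_middle_mul a b c - qmultInt_pred_right_mul a b c + this

theorem qmult_comp_X_sq_pascal (a b c : ℕ) (h : 1 ≤ a + b + c) :
    (qmult a b c).comp (X ^ 2) = (qmultInt ((a : ℤ) - 1) b c).comp (X ^ 2)
      + X ^ (2 * a) * (qmultInt a ((b : ℤ) - 1) c).comp (X ^ 2)
      + X ^ (2 * (a + b)) * (qmultInt a b ((c : ℤ) - 1)).comp (X ^ 2) := by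
  rw [qmult_pascal a b c h]
  simp only [add_comp, mul_comp, pow_comp, X_comp, ← pow_mul, mul_comm 2]

theorem qmult_comp_X_sq_pascal' (a b c : ℕ) (h : 1 ≤ a + b + c) :
    (qmult a b c).comp (X ^ 2) = X ^ (2 * c) * (qmultInt ((a : ℤ) - 1) b c).comp (X ^ 2)
      + X ^ (2 * (a + c)) * (qmultInt a ((b : ℤ) - 1) c).comp (X ^ 2)
      + (qmultInt a b ((c : ℤ) - 1)).comp (X ^ 2) := by
  rw [qmult_pascal' a b c h]
  simp only [add_comp, mul_comp, pow_comp, X_comp, ← pow_mul, mul_comm 2]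

structure IsDaggerSolution {R : Type*} [Semiring R] (q : R) (c₁ c₂ : ℤ → ℤ → ℤ → R) : Prop where
  eq_zero_of_neg : ∀ a b c : ℤ, a < 0 ∨ b < 0 ∨ c < 0 → c₁ a b c = 0 ∧ c₂ a b c = 0
  init : c₁ 0 0 0 = 1 ∧ c₂ 0 0 0 = 1
  recurrence : ∀ a b c : ℕ, 1 ≤ a + b + c →
    c₁ a b c = q ^ (2 * (a + b + c)) * c₂ ((a : ℤ) - 1) b c
      + q ^ (2 * (a + b + c)) * c₁ a ((b : ℤ) - 1) c + c₁ a b ((c : ℤ) - 1) ∧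
    c₂ a b c = c₂ ((a : ℤ) - 1) b c + c₁ a ((b : ℤ) - 1) c + c₁ a b ((c : ℤ) - 1)

namespace IsDaggerSolution

variable {R : Type*} [Semiring R] {q : R} {c₁ c₂ d₁ d₂ : ℤ → ℤ → ℤ → R}

theorem unique (hc : IsDaggerSolution q c₁ c₂) (hd : IsDaggerSolution q d₁ d₂) :
    c₁ = d₁ ∧ c₂ = d₂ := by
  suffices h : ∀ n : ℕ, ∀ a b c : ℤ, a + b + c < n → c₁ a b c = d₁ a b c ∧ c₂ a b c = d₂ a b c by
    have h' (a b c : ℤ) := h ((a + b + c).toNat + 1) a b c (by omega)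
    exact ⟨funext₃ fun a b c => (h' a b c).1, funext₃ fun a b c => (h' a b c).2⟩
  have agree_of_neg (a b c : ℤ) (hneg : a < 0 ∨ b < 0 ∨ c < 0) :
      c₁ a b c = d₁ a b c ∧ c₂ a b c = d₂ a b c := by
    rw [(hc.eq_zero_of_neg a b c hneg).1, (hc.eq_zero_of_neg a b c hneg).2,
      (hd.eq_zero_of_neg a b c hneg).1, (hd.eq_zero_of_neg a b c hneg).2]
    exact ⟨rfl, rfl⟩
  intro n
  induction n with
  | zero => exact fun a b c hn => agree_of_neg a b c (by omega)
  | succ n ih =>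
    intro a b c hn
    by_cases hneg : a < 0 ∨ b < 0 ∨ c < 0
    · exact agree_of_neg a b c hneg
    lift a to ℕ using by omega
    lift b to ℕ using by omega
    lift c to ℕ using by omega
    rcases Nat.eq_zero_or_pos (a + b + c) with h0 | hpos
    · obtain ⟨rfl, rfl, rfl⟩ : a = 0 ∧ b = 0 ∧ c = 0 := by omega
      exact ⟨hc.init.1.trans hd.init.1.symm, hc.init.2.trans hd.init.2.symm⟩
    obtain ⟨-, hA₂⟩ := ih ((a : ℤ) - 1) b c (by omega)
    obtain ⟨hB₁, -⟩ := ih a ((b : ℤ) - 1) c (by omega)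
    obtain ⟨hC₁, -⟩ := ih a b ((c : ℤ) - 1) (by omega)
    rw [(hc.recurrence a b c hpos).1, (hc.recurrence a b c hpos).2,
      (hd.recurrence a b c hpos).1, (hd.recurrence a b c hpos).2, hA₂, hB₁, hC₁]
    exact ⟨rfl, rfl⟩

end IsDaggerSolution

noncomputable def daggerClosedForm₁ (a b c : ℤ) : ℤ[X] :=
  X ^ (2 * a.toNat + b.toNat * (b.toNat + 1)) * (qmultInt a b c).comp (X ^ 2)

noncomputable def daggerClosedForm₂ (a b c : ℤ) : ℤ[X] :=
  X ^ (b.toNat * (b.toNat - 1)) * (qmultInt a b c).comp (X ^ 2)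

theorem isDaggerSolution_daggerClosedForm :
    IsDaggerSolution (X : ℤ[X]) daggerClosedForm₁ daggerClosedForm₂ where
  eq_zero_of_neg a b c h := by
    simp [daggerClosedForm₁, daggerClosedForm₂, qmultInt_eq_zero_of_neg h]
  init := by simp [daggerClosedForm₁, daggerClosedForm₂, qmultInt, qmult, qbinom]
  recurrence a b c h := by
    have hpred : ((b : ℤ) - 1).toNat * (((b : ℤ) - 1).toNat + 1) = b * (b - 1) := by
      rcases b with _ | b <;> simp [mul_comm]
    have hsucc : b * (b + 1) = b * (b - 1) + 2 * b := by
      rcases b with _ | b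
      · rfl
      · rw [Nat.add_sub_cancel]
        ring
    simp only [daggerClosedForm₁, daggerClosedForm₂, Int.toNat_natCast, hpred, hsucc,
      qmultInt_natCast]
    constructor
    · rw [qmult_comp_X_sq_pascal' a b c h]
      ring
    · rw [qmult_comp_X_sq_pascal a b c h]
      ring

/-- if `c₁†, c₂† : ℤ³ → ℤ[q]` vanish on negative arguments, equal `1` at
`(0,0,0)`, and satisfy the type `A₂⁽²⁾†` recurrences
`c₁†(a,b,c) = q^{2n} c₂†(a-1,b,c) + q^{2n} c₁†(a,b-1,c) + c₁†(a,b,c-1)` and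
`c₂†(a,b,c) = c₂†(a-1,b,c) + c₁†(a,b-1,c) + c₁†(a,b,c-1)` with `n = a+b+c ≥ 1`,
then `c₂†(a,b,c) = q^{b(b-1)} · qmultinomial(a+b+c; a,b,c)` evaluated at `q²`. -/
theorem c2_dagger_closed_form
    (c₁ c₂ : ℤ → ℤ → ℤ → Polynomial ℤ)
    (hneg : ∀ a b c : ℤ, a < 0 ∨ b < 0 ∨ c < 0 → c₁ a b c = 0 ∧ c₂ a b c = 0)
    (hinit : c₁ 0 0 0 = 1 ∧ c₂ 0 0 0 = 1)
    (hrec : ∀ a b c : ℕ, 1 ≤ a + b + c →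
      c₁ a b c = X ^ (2 * (a + b + c)) * c₂ ((a : ℤ) - 1) b c
        + X ^ (2 * (a + b + c)) * c₁ a ((b : ℤ) - 1) c
        + c₁ a b ((c : ℤ) - 1) ∧
      c₂ a b c = c₂ ((a : ℤ) - 1) b c
        + c₁ a ((b : ℤ) - 1) c
        + c₁ a b ((c : ℤ) - 1)) :
    ∀ a b c : ℕ, c₂ a b c = X ^ (b * (b - 1)) * (qmult a b c).comp (X ^ 2) := by
  intro a b c
  have h := congrFun₃ (IsDaggerSolution.unique ⟨hneg, hinit, hrec⟩
    isDaggerSolution_daggerClosedForm).2 a b c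
  simpa [daggerClosedForm₂] using h
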